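/- The function L(x) = e^x E1(x) - 1 + x·G(x), with G(x) = ∫_x^∞ e^y E1(y)/y dy, satisfies L(x) → 0 as x → +∞. -/

import Mathlib

open MeasureTheory Real Filter

noncomputable def E1 (x : ℝ) : ℝ := ∫ y in Set.Ioi x, Real.exp (-y) / y

noncomputable def G (x : ℝ) : ℝ := ∫ y in Set.Ioi x, Real.exp y * E1 y / y

noncomputable def L (x : ℝ) : ℝ := Real.exp x * E1 x - 1 + x * G x

lemma expneg_int (x : ℝ) : IntegrableOn (fun y => Real.exp (-y)) (Set.Ioi x) := by
  simpa using exp_neg_integrableOn_Ioi x one_pos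

lemma E1int {x : ℝ} (hx : 0 < x) :
    IntegrableOn (fun y => Real.exp (-y) / y) (Set.Ioi x) := by
  apply Integrable.mono' ((expneg_int x).const_mul (1/x))
  · apply ContinuousOn.aestronglyMeasurable _ measurableSet_Ioi
    exact ((Real.continuous_exp.comp continuous_neg).continuousOn).div continuousOn_id
      (fun y hy => (hx.trans hy).ne')
  · filter_upwards [ae_restrict_mem measurableSet_Ioi] with y hy
    have hy0 : 0 < y := hx.trans hy
    rw [Real.norm_eq_abs, abs_of_nonneg (by positivity), one_div, inv_mul_eq_div]
    gcongr
    exact le_of_lt hy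

lemma E1_nonneg {x : ℝ} (hx : 0 < x) : 0 ≤ E1 x :=
  setIntegral_nonneg measurableSet_Ioi fun y hy =>
    div_nonneg (Real.exp_pos _).le (hx.trans hy).le

lemma E1_le {x : ℝ} (hx : 0 < x) : Real.exp x * E1 x ≤ 1 / x := by
  have h : E1 x ≤ ∫ y in Set.Ioi x, (1/x) * Real.exp (-y) := by
    apply setIntegral_mono_on (E1int hx) ((expneg_int x).const_mul (1/x)) measurableSet_Ioi
    intro y hy
    have hy0 : 0 < y := hx.trans hy
    rw [one_div, inv_mul_eq_div]
    gcongr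
    exact le_of_lt hy
  have h2 : (∫ y in Set.Ioi x, (1/x) * Real.exp (-y)) = (1/x) * Real.exp (-x) := by
    rw [MeasureTheory.integral_const_mul, integral_exp_neg_Ioi]
  have h3 : Real.exp x * E1 x ≤ Real.exp x * ((1/x) * Real.exp (-x)) :=
    mul_le_mul_of_nonneg_left (h.trans h2.le) (Real.exp_pos x).le
  have h4 : Real.exp x * ((1/x) * Real.exp (-x)) = 1 / x := by
    rw [Real.exp_neg]
    field_simp
  linarith

lemma hasDerivAt_F {y : ℝ} (hy : 0 < y) :
    HasDerivAt (fun y => Real.exp (-y) * (y - 1) / y^2)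
      (Real.exp (-y) * (2 - y^2) / y^3) y := by
  have h1 : HasDerivAt (fun y : ℝ => Real.exp (-y)) (-Real.exp (-y)) y := by
    simpa using ((hasDerivAt_id y).neg).exp
  have h2 : HasDerivAt (fun y : ℝ => y - 1) 1 y := (hasDerivAt_id y).sub_const 1
  have hg : HasDerivAt (fun y : ℝ => Real.exp (-y) * (y - 1))
      (Real.exp (-y) * (2 - y)) y := by
    have := h1.fun_mul h2
    refine this.congr_deriv ?_
    ring
  have hp : HasDerivAt (fun y : ℝ => y^2) (2 * y) y := by
    simpa using hasDerivAt_pow 2 y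
  have := hg.fun_div hp (by positivity : y^2 ≠ 0)
  refine this.congr_deriv ?_
  field_simp
  ring

lemma F_tendsto : Tendsto (fun y => Real.exp (-y) * (y - 1) / y^2) atTop (nhds 0) := by
  apply tendsto_of_tendsto_of_tendsto_of_le_of_le' tendsto_const_nhds
    Real.tendsto_exp_neg_atTop_nhds_zero
  · filter_upwards [eventually_ge_atTop (1:ℝ)] with y hy
    exact div_nonneg (mul_nonneg (Real.exp_pos _).le (by linarith)) (by positivity)
  · filter_upwards [eventually_ge_atTop (1:ℝ)] with y hy
    have hy0 : 0 < y := by linarith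
    rw [div_le_iff₀ (by positivity)]
    nlinarith [Real.exp_pos (-y), mul_pos (Real.exp_pos (-y)) hy0]

lemma F'_int {x : ℝ} (hx : 2 ≤ x) :
    IntegrableOn (fun y => Real.exp (-y) * (2 - y^2) / y^3) (Set.Ioi x) := by
  have hx0 : 0 < x := by linarith
  apply Integrable.mono' (expneg_int x)
  · apply ContinuousOn.aestronglyMeasurable _ measurableSet_Ioi
    apply ContinuousOn.div
    · exact (Continuous.continuousOn (by continuity))
    · exact (Continuous.continuousOn (by continuity))
    · intro y hy
      have : 0 < y := hx0.trans hy
      positivity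
  · filter_upwards [ae_restrict_mem measurableSet_Ioi] with y hy
    have hy2 : 2 ≤ y := hx.trans (le_of_lt hy)
    have hy0 : 0 < y := by linarith
    rw [Real.norm_eq_abs, abs_div, abs_mul, abs_of_pos (Real.exp_pos _),
      abs_of_pos (by positivity : (0:ℝ) < y^3), div_le_iff₀ (by positivity)]
    have habs : |2 - y^2| ≤ y^3 := by
      rw [abs_le]
      constructor <;> nlinarith
    nlinarith [Real.exp_pos (-y)]

lemma E1_ge {x : ℝ} (hx : 2 ≤ x) : (x - 1) / x^2 ≤ Real.exp x * E1 x := by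
  have hx0 : 0 < x := by linarith
  have hFTC : (∫ y in Set.Ioi x, Real.exp (-y) * (2 - y^2) / y^3)
      = 0 - Real.exp (-x) * (x - 1) / x^2 := by
    apply integral_Ioi_of_hasDerivAt_of_tendsto' (f' := fun y => Real.exp (-y) * (2 - y^2) / y^3)
      (fun y hy => hasDerivAt_F (lt_of_lt_of_le hx0 hy)) (F'_int hx) F_tendsto
  have hmono : (∫ y in Set.Ioi x, -(Real.exp (-y) * (2 - y^2) / y^3)) ≤ E1 x := by
    apply setIntegral_mono_on (F'_int hx).neg (E1int hx0) measurableSet_Ioi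
    intro y hy
    simp only [Pi.neg_apply]
    have hy0 : 0 < y := hx0.trans hy
    have heq : -(Real.exp (-y) * (2 - y^2) / y^3) = Real.exp (-y) * (y^2 - 2) / y^3 := by
      ring
    rw [heq, div_le_div_iff₀ (by positivity) hy0]
    nlinarith [mul_pos (Real.exp_pos (-y)) hy0]
  rw [integral_neg, hFTC] at hmono
  have h2 : Real.exp (-x) * (x - 1) / x^2 ≤ E1 x := by linarith
  have h3 : Real.exp x * (Real.exp (-x) * (x - 1) / x^2) ≤ Real.exp x * E1 x :=
    mul_le_mul_of_nonneg_left h2 (Real.exp_pos x).le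
  have h4 : Real.exp x * (Real.exp (-x) * (x - 1) / x^2) = (x - 1) / x^2 := by
    rw [Real.exp_neg]
    field_simp
  linarith

lemma rpow_neg_two {y : ℝ} (hy : 0 < y) : y ^ (-2:ℝ) = 1 / y^2 := by
  rw [Real.rpow_neg hy.le, Real.rpow_two, one_div]

lemma rpow_neg_three {y : ℝ} (hy : 0 < y) : y ^ (-3:ℝ) = 1 / y^3 := by
  rw [Real.rpow_neg hy.le, show (3:ℝ) = ((3:ℕ):ℝ) by norm_num, Real.rpow_natCast, one_div]

lemma E1_antitoneOn {x : ℝ} (hx : 0 < x) : AntitoneOn E1 (Set.Ioi x) := by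
  intro a ha b hb hab
  have ha0 : 0 < a := hx.trans ha
  apply setIntegral_mono_set (E1int ha0)
  · filter_upwards [ae_restrict_mem measurableSet_Ioi] with y hy
    have : 0 < y := ha0.trans hy
    positivity
  · exact (Set.Ioi_subset_Ioi hab).eventuallyLE

lemma Gmeas {x : ℝ} (hx : 0 < x) :
    AEStronglyMeasurable (fun y => Real.exp y * E1 y / y) (volume.restrict (Set.Ioi x)) := by
  have hE1 : AEMeasurable E1 (volume.restrict (Set.Ioi x)) :=
    aemeasurable_restrict_of_antitoneOn measurableSet_Ioi (E1_antitoneOn hx)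
  exact ((Real.measurable_exp.aemeasurable.mul hE1).div aemeasurable_id).aestronglyMeasurable

lemma Gint {x : ℝ} (hx : 2 ≤ x) :
    IntegrableOn (fun y => Real.exp y * E1 y / y) (Set.Ioi x) := by
  have hx0 : 0 < x := by linarith
  apply Integrable.mono' (integrableOn_Ioi_rpow_of_lt (by norm_num : (-2:ℝ) < -1) hx0)
    (Gmeas hx0)
  filter_upwards [ae_restrict_mem measurableSet_Ioi] with y hy
  have hy2 : 2 ≤ y := hx.trans (le_of_lt hy)
  have hy0 : 0 < y := by linarith
  rw [Real.norm_eq_abs,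
    abs_of_nonneg (div_nonneg (mul_nonneg (Real.exp_pos y).le (E1_nonneg hy0)) hy0.le),
    rpow_neg_two hy0]
  have h1 : Real.exp y * E1 y ≤ 1 / y := E1_le hy0
  calc Real.exp y * E1 y / y ≤ (1 / y) / y := by gcongr
    _ = 1 / y^2 := by ring

lemma G_le {x : ℝ} (hx : 2 ≤ x) : G x ≤ 1 / x := by
  have hx0 : 0 < x := by linarith
  have h : G x ≤ ∫ y in Set.Ioi x, y ^ (-2:ℝ) := by
    apply setIntegral_mono_on (Gint hx)
      (integrableOn_Ioi_rpow_of_lt (by norm_num : (-2:ℝ) < -1) hx0) measurableSet_Ioi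
    intro y hy
    have hy0 : 0 < y := hx0.trans hy
    rw [rpow_neg_two hy0]
    have h1 : Real.exp y * E1 y ≤ 1 / y := E1_le hy0
    calc Real.exp y * E1 y / y ≤ (1 / y) / y := by gcongr
      _ = 1 / y^2 := by ring
  rw [integral_Ioi_rpow_of_lt (by norm_num) hx0] at h
  have : -x ^ (-2 + 1 : ℝ) / (-2 + 1) = 1 / x := by
    norm_num [Real.rpow_neg_one]
  linarith [h.trans_eq this]

lemma G_ge {x : ℝ} (hx : 2 ≤ x) : 1 / x - 1 / (2 * x^2) ≤ G x := by
  have hx0 : 0 < x := by linarith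
  have hint2 : IntegrableOn (fun y : ℝ => y ^ (-2:ℝ)) (Set.Ioi x) :=
    integrableOn_Ioi_rpow_of_lt (by norm_num) hx0
  have hint3 : IntegrableOn (fun y : ℝ => y ^ (-3:ℝ)) (Set.Ioi x) :=
    integrableOn_Ioi_rpow_of_lt (by norm_num) hx0
  have h : (∫ y in Set.Ioi x, (y ^ (-2:ℝ) - y ^ (-3:ℝ))) ≤ G x := by
    apply setIntegral_mono_on (hint2.sub hint3) (Gint hx) measurableSet_Ioi
    intro y hy
    simp only [Pi.sub_apply]
    have hy2 : 2 ≤ y := hx.trans (le_of_lt hy)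
    have hy0 : 0 < y := by linarith
    rw [rpow_neg_two hy0, rpow_neg_three hy0]
    have h1 : (y - 1) / y^2 ≤ Real.exp y * E1 y := E1_ge hy2
    have h2 : ((y - 1) / y^2) / y ≤ Real.exp y * E1 y / y := by gcongr
    have h3 : 1 / y^2 - 1 / y^3 = ((y - 1) / y^2) / y := by
      field_simp
    linarith
  rw [integral_sub hint2 hint3, integral_Ioi_rpow_of_lt (by norm_num) hx0,
    integral_Ioi_rpow_of_lt (by norm_num) hx0] at h
  have e2 : -x ^ (-2 + 1 : ℝ) / (-2 + 1) = 1 / x := by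
    norm_num [Real.rpow_neg_one]
  have e3 : -x ^ (-3 + 1 : ℝ) / (-3 + 1) = 1 / (2 * x^2) := by
    norm_num [rpow_neg_two hx0]
    ring
  rw [e2, e3] at h
  exact h

theorem tendsto_L_atTop : Tendsto L atTop (nhds 0) := by
  apply tendsto_of_tendsto_of_tendsto_of_le_of_le' (g := fun x : ℝ => -(2 / x))
    (h := fun x : ℝ => 2 / x)
  · simpa using (tendsto_const_nhds.div_atTop (tendsto_id (α := ℝ))).neg
  · exact tendsto_const_nhds.div_atTop tendsto_id
  · filter_upwards [eventually_ge_atTop (2:ℝ)] with x hx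
    have hx0 : 0 < x := by linarith
    have h1 : (x - 1) / x^2 ≤ Real.exp x * E1 x := E1_ge hx
    have h2 : 1 / x - 1 / (2 * x^2) ≤ G x := G_ge hx
    have h3 : x * (1 / x - 1 / (2 * x^2)) ≤ x * G x :=
      mul_le_mul_of_nonneg_left h2 hx0.le
    have h4 : x * (1 / x - 1 / (2 * x^2)) = 1 - 1 / (2 * x) := by
      field_simp
    have h5 : (0:ℝ) ≤ (x - 1) / x^2 := div_nonneg (by linarith) (by positivity)
    have h6 : 1 / (2 * x) ≤ 2 / x := by
      rw [div_le_div_iff₀ (by positivity) hx0]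
      nlinarith
    unfold L
    nlinarith
  · filter_upwards [eventually_ge_atTop (2:ℝ)] with x hx
    have hx0 : 0 < x := by linarith
    have h1 : Real.exp x * E1 x ≤ 1 / x := E1_le hx0
    have h2 : G x ≤ 1 / x := G_le hx
    have h3 : x * G x ≤ x * (1 / x) := mul_le_mul_of_nonneg_left h2 hx0.le
    have h4 : x * (1 / x) = 1 := by field_simp
    have h5 : 1 / x ≤ 2 / x := by gcongr <;> norm_num
    unfold L
    nlinarith
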